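/- Let g₁,…,gₘ ∈ ℝ[X₁,…,Xₙ] and K := {x ∈ ℝⁿ : gⱼ(x) ≥ 0, j = 1,…,m}. Assume the Archimedean assumption and Slater's condition hold, that for every j, ∇gⱼ(y) ≠ 0 whenever y ∈ K and gⱼ(y) = 0, and that the certificate of convexity holds with degree bounds 2d₁,…,2dₘ; set d := maxⱼ dⱼ. Then every polynomial f ∈ ℝ[X₁,…,Xₙ] of degree at most 1 that is nonnegative on K can be written f = Δ₀ + Σⱼ₌₁ᵐ Δⱼ·gⱼ with Δ₀, Δ₁,…,Δₘ SOS polynomials satisfying deg Δ₀ ≤ 2d and deg(Δⱼ·gⱼ) ≤ 2d for all j. -/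

import Mathlib

open MvPolynomial

/-- A polynomial is SOS if it is a finite sum of squares of polynomials. -/
def IsSOS {τ : Type*} (p : MvPolynomial τ ℝ) : Prop :=
  ∃ (k : ℕ) (q : Fin k → MvPolynomial τ ℝ), p = ∑ i, q i ^ 2

/-- A polynomial is SOS of degree at most `2d` if it is a finite sum of squares of
polynomials, each of degree at most `d`. -/
def IsSOSUpTo {τ : Type*} (d : ℕ) (p : MvPolynomial τ ℝ) : Prop :=
  ∃ (k : ℕ) (q : Fin k → MvPolynomial τ ℝ),
    (∀ i, (q i).totalDegree ≤ d) ∧ p = ∑ i, q i ^ 2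

/-- `g_k(X)`: the polynomial `g k` in the first group of variables of `ℝ[X,Y]`. -/
noncomputable def gXp {n m : ℕ} (g : Fin m → MvPolynomial (Fin n) ℝ) (k : Fin m) :
    MvPolynomial (Fin n ⊕ Fin n) ℝ := rename Sum.inl (g k)

/-- `g_k(Y)`: the polynomial `g k` in the second group of variables of `ℝ[X,Y]`. -/
noncomputable def gYp {n m : ℕ} (g : Fin m → MvPolynomial (Fin n) ℝ) (k : Fin m) :
    MvPolynomial (Fin n ⊕ Fin n) ℝ := rename Sum.inr (g k)

/-- The polynomial `⟨∇gⱼ(Y), X − Y⟩ = Σᵢ (∂gⱼ/∂Xᵢ)(Y)·(Xᵢ − Yᵢ) ∈ ℝ[X,Y]`. -/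
noncomputable def gradIP {n m : ℕ} (g : Fin m → MvPolynomial (Fin n) ℝ) (j : Fin m) :
    MvPolynomial (Fin n ⊕ Fin n) ℝ :=
  ∑ i, rename Sum.inr (pderiv i (g j)) * (X (Sum.inl i) - X (Sum.inr i))

/-- The certificate of convexity with degree bounds `2dⱼ`:
`⟨∇gⱼ(Y), X−Y⟩ = Σ_{k=0}^m σ_{jk}·g_k(X) + Σ_{k≠j} ψ_{jk}·g_k(Y) + ψⱼ·gⱼ(Y)` (`g₀ ≡ 1`)
with `σ_{jk}` and `ψ_{jk}` (`k ≠ j`) SOS, all products of degree at most `2dⱼ`. -/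
def CertificateOfConvexity {n m : ℕ} (g : Fin m → MvPolynomial (Fin n) ℝ)
    (dj : Fin m → ℕ) : Prop :=
  ∀ j : Fin m,
    ∃ (σ0 ψ0 : MvPolynomial (Fin n ⊕ Fin n) ℝ)
      (σ ψ : Fin m → MvPolynomial (Fin n ⊕ Fin n) ℝ)
      (ψj : MvPolynomial (Fin n ⊕ Fin n) ℝ),
      IsSOS σ0 ∧ IsSOS ψ0 ∧ (∀ k, IsSOS (σ k)) ∧ (∀ k, k ≠ j → IsSOS (ψ k)) ∧
      gradIP g j =
        σ0 + (∑ k, σ k * gXp g k) + ψ0 + (∑ k ∈ Finset.univ.erase j, ψ k * gYp g k)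
          + ψj * gYp g j ∧
      σ0.totalDegree ≤ 2 * dj j ∧ ψ0.totalDegree ≤ 2 * dj j ∧
      (∀ k, (σ k * gXp g k).totalDegree ≤ 2 * dj j) ∧
      (∀ k, k ≠ j → (ψ k * gYp g k).totalDegree ≤ 2 * dj j) ∧
      (ψj * gYp g j).totalDegree ≤ 2 * dj j

/-!
Let `y` minimise the affine function `f` on the compact set `K`. Specialising the certificate of
convexity at `Y = y` puts the linearisation `⟨∇gⱼ(y), X - y⟩` of every active constraint into the
truncated quadratic module of degree `2dⱼ`. In particular it is nonnegative on `K`, so Slater's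
point `x₀` and nondegeneracy give `⟨∇gⱼ(y), x₀ - y⟩ > 0`: the Mangasarian–Fromovitz constraint
qualification. It yields KKT multipliers `λ ≥ 0` with `∇f = Σ λⱼ ∇gⱼ(y)` and `λⱼ gⱼ(y) = 0`
(Gordan's alternative, by separating `0` from the compact image of a simplex), and since `f` is
affine, `f = f(y) + Σ λⱼ ⟨∇gⱼ(y), X - y⟩` lies in the quadratic module.
-/

open Filter Topology

namespace IsSOS

variable {τ : Type*} {p q : MvPolynomial τ ℝ}

theorem zero : IsSOS (0 : MvPolynomial τ ℝ) := ⟨0, ![], by simp⟩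

theorem add (hp : IsSOS p) (hq : IsSOS q) : IsSOS (p + q) := by
  obtain ⟨k, f, rfl⟩ := hp
  obtain ⟨l, h, rfl⟩ := hq
  exact ⟨k + l, Fin.append f h, by simp [Fin.sum_univ_add]⟩

theorem smul {t : ℝ} (ht : 0 ≤ t) (hp : IsSOS p) : IsSOS (t • p) := by
  obtain ⟨k, f, rfl⟩ := hp
  refine ⟨k, fun i => C √t * f i, ?_⟩
  simp_rw [Finset.smul_sum, mul_pow, ← map_pow, Real.sq_sqrt ht, smul_eq_C_mul]

theorem C {r : ℝ} (hr : 0 ≤ r) : IsSOS (C r : MvPolynomial τ ℝ) := by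
  have h1 : IsSOS (1 : MvPolynomial τ ℝ) := ⟨1, ![1], by simp⟩
  simpa [smul_eq_C_mul] using h1.smul hr

theorem map {τ' : Type*} (φ : MvPolynomial τ ℝ →ₐ[ℝ] MvPolynomial τ' ℝ) (hp : IsSOS p) :
    IsSOS (φ p) := by
  obtain ⟨k, f, rfl⟩ := hp
  exact ⟨k, fun i => φ (f i), by simp⟩

theorem eval_nonneg (hp : IsSOS p) (x : τ → ℝ) : 0 ≤ eval x p := by
  obtain ⟨k, f, rfl⟩ := hp
  simpa using Finset.sum_nonneg fun i _ => sq_nonneg (eval x (f i))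

end IsSOS

def nonnegSet {ι σ : Type*} (g : ι → MvPolynomial σ ℝ) : Set (σ → ℝ) :=
  {x | ∀ j, 0 ≤ eval x (g j)}

/-- `p ∈ Q_D(g)`, the truncated quadratic module of `g` in degree `D`. -/
def MemQuadraticModule {σ ι : Type*} [Fintype ι] (g : ι → MvPolynomial σ ℝ) (D : ℕ)
    (p : MvPolynomial σ ℝ) : Prop :=
  ∃ (Δ0 : MvPolynomial σ ℝ) (Δ : ι → MvPolynomial σ ℝ),
    IsSOS Δ0 ∧ (∀ j, IsSOS (Δ j)) ∧ Δ0.totalDegree ≤ D ∧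
    (∀ j, (Δ j * g j).totalDegree ≤ D) ∧ p = Δ0 + ∑ j, Δ j * g j

namespace MemQuadraticModule

variable {σ ι : Type*} [Fintype ι] {g : ι → MvPolynomial σ ℝ} {D : ℕ} {p q : MvPolynomial σ ℝ}

theorem of_isSOS (hp : IsSOS p) (hD : p.totalDegree ≤ D) : MemQuadraticModule g D p :=
  ⟨p, 0, hp, fun _ => IsSOS.zero, hD, by simp, by simp⟩

theorem zero : MemQuadraticModule g D 0 :=
  of_isSOS IsSOS.zero (by simp)

theorem isSOS_mul {s : MvPolynomial σ ℝ} (hs : IsSOS s) (j : ι)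
    (hD : (s * g j).totalDegree ≤ D) : MemQuadraticModule g D (s * g j) := by
  classical
  refine ⟨0, Pi.single j s, IsSOS.zero, fun k => ?_, by simp, fun k => ?_, ?_⟩
  · rcases eq_or_ne k j with rfl | hk
    · simpa using hs
    · simpa [hk] using IsSOS.zero
  · rcases eq_or_ne k j with rfl | hk
    · simpa using hD
    · simp [hk]
  · simp [Pi.single_apply]

theorem add (hp : MemQuadraticModule g D p) (hq : MemQuadraticModule g D q) :
    MemQuadraticModule g D (p + q) := by
  obtain ⟨Δ0, Δ, h0, hΔ, hd0, hdΔ, rfl⟩ := hp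
  obtain ⟨Γ0, Γ, h0', hΓ, hd0', hdΓ, rfl⟩ := hq
  refine ⟨Δ0 + Γ0, Δ + Γ, h0.add h0', fun j => (hΔ j).add (hΓ j),
    (totalDegree_add _ _).trans (max_le hd0 hd0'), fun j => ?_, ?_⟩
  · rw [Pi.add_apply, add_mul]
    exact (totalDegree_add _ _).trans (max_le (hdΔ j) (hdΓ j))
  · simp only [Pi.add_apply, add_mul, Finset.sum_add_distrib]
    abel

theorem sum {κ : Type*} (s : Finset κ) {f : κ → MvPolynomial σ ℝ}
    (h : ∀ i ∈ s, MemQuadraticModule g D (f i)) : MemQuadraticModule g D (∑ i ∈ s, f i) :=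
  Finset.sum_induction f (MemQuadraticModule g D) (fun _ _ => add) zero h

theorem smul {t : ℝ} (ht : 0 ≤ t) (hp : MemQuadraticModule g D p) :
    MemQuadraticModule g D (t • p) := by
  obtain ⟨Δ0, Δ, h0, hΔ, hd0, hdΔ, rfl⟩ := hp
  refine ⟨t • Δ0, t • Δ, h0.smul ht, fun j => (hΔ j).smul ht,
    (totalDegree_smul_le _ _).trans hd0, fun j => ?_, ?_⟩
  · rw [Pi.smul_apply, smul_mul_assoc]
    exact (totalDegree_smul_le _ _).trans (hdΔ j)
  · simp [smul_add, Finset.smul_sum]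

theorem mono {D' : ℕ} (hp : MemQuadraticModule g D p) (hD : D ≤ D') :
    MemQuadraticModule g D' p := by
  obtain ⟨Δ0, Δ, h0, hΔ, hd0, hdΔ, rfl⟩ := hp
  exact ⟨Δ0, Δ, h0, hΔ, hd0.trans hD, fun j => (hdΔ j).trans hD, rfl⟩

theorem eval_nonneg (hp : MemQuadraticModule g D p) {x : σ → ℝ} (hx : x ∈ nonnegSet g) :
    0 ≤ eval x p := by
  obtain ⟨Δ0, Δ, h0, hΔ, -, -, rfl⟩ := hp
  simpa using add_nonneg (h0.eval_nonneg x)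
    (Finset.sum_nonneg fun j _ => mul_nonneg ((hΔ j).eval_nonneg x) (hx j))

end MemQuadraticModule

theorem Finsupp.eq_zero_or_eq_single_of_degree_le_one {σ : Type*} {d : σ →₀ ℕ}
    (hd : d.degree ≤ 1) : d = 0 ∨ ∃ i, d = Finsupp.single i 1 := by
  classical
  rcases Nat.le_one_iff_eq_zero_or_eq_one.mp hd with h | h
  · exact Or.inl ((Finsupp.degree_eq_zero_iff d).mp h)
  · have hcard : Multiset.card (Finsupp.toMultiset d) = 1 := by
      rw [Finsupp.card_toMultiset]; exact h
    obtain ⟨i, hi⟩ := Multiset.card_eq_one.mp hcard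
    exact Or.inr ⟨i, by
      rw [← Multiset.toFinsupp_singleton]; exact (Multiset.toFinsupp_eq_iff.mpr hi.symm).symm⟩

namespace MvPolynomial

variable {σ τ R : Type*} [CommSemiring R]

theorem eq_C_add_sum_C_mul_X_of_totalDegree_le_one [Fintype σ] {f : MvPolynomial σ R}
    (hf : f.totalDegree ≤ 1) :
    f = C (coeff 0 f) + ∑ i, C (coeff (Finsupp.single i 1) f) * X i := by
  classical
  ext d
  simp only [coeff_add, coeff_C, coeff_sum, coeff_C_mul, coeff_X, mul_ite, mul_one, mul_zero]
  rcases em (d = 0 ∨ ∃ i, d = Finsupp.single i 1) with (rfl | ⟨i, rfl⟩) | hd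
  · simp
  · simp [Finsupp.single_left_inj, eq_comm (a := (0 : σ →₀ ℕ))]
  · push Not at hd
    have hf0 : coeff d f = 0 := by
      by_contra h
      exact (Finsupp.eq_zero_or_eq_single_of_degree_le_one
        ((le_totalDegree (mem_support_iff.mpr h)).trans hf)).elim hd.1 (fun ⟨i, hi⟩ => hd.2 i hi)
    simp [hf0, Ne.symm hd.1, fun i => Ne.symm (hd.2 i)]

theorem totalDegree_aeval_le {F : σ → MvPolynomial τ R} (hF : ∀ i, (F i).totalDegree ≤ 1)
    (p : MvPolynomial σ R) : (aeval F p).totalDegree ≤ p.totalDegree := by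
  conv_lhs => rw [p.as_sum, map_sum]
  refine totalDegree_finsetSum_le fun d hd => ?_
  rw [aeval_monomial, algebraMap_eq]
  refine (totalDegree_mul _ _).trans ?_
  rw [totalDegree_C, zero_add]
  refine (totalDegree_finsetProd _ _).trans (le_trans ?_ (le_totalDegree hd))
  refine Finset.sum_le_sum fun i _ => (totalDegree_pow _ _).trans ?_
  simpa using Nat.mul_le_mul_left (d i) (hF i)

end MvPolynomial

section Linearization

variable {σ : Type*}

noncomputable def evalGrad (y : σ → ℝ) (p : MvPolynomial σ ℝ) : σ → ℝ :=
  fun i => eval y (pderiv i p)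

variable [Fintype σ]

noncomputable def linearization (p : MvPolynomial σ ℝ) (y : σ → ℝ) : MvPolynomial σ ℝ :=
  ∑ i, C (evalGrad y p i) * (X i - C (y i))

theorem eval_linearization (p : MvPolynomial σ ℝ) (x y : σ → ℝ) :
    eval x (linearization p y) = evalGrad y p ⬝ᵥ (x - y) := by
  simp [linearization, dotProduct]

theorem linearization_eq_sum_smul {ι : Type*} [Fintype ι] {f : MvPolynomial σ ℝ}
    {g : ι → MvPolynomial σ ℝ} {y : σ → ℝ} {μ : ι → ℝ}
    (h : evalGrad y f = ∑ j, μ j • evalGrad y (g j)) :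
    linearization f y = ∑ j, μ j • linearization (g j) y := by
  simp only [linearization, h, Finset.sum_apply, Pi.smul_apply, smul_eq_mul, map_sum, map_mul,
    Finset.sum_mul, Finset.smul_sum, smul_eq_C_mul, mul_assoc]
  exact Finset.sum_comm

theorem eq_C_eval_add_linearization {f : MvPolynomial σ ℝ} (hf : f.totalDegree ≤ 1)
    (y : σ → ℝ) : f = C (eval y f) + linearization f y := by
  obtain ⟨a, c, rfl⟩ : ∃ (a : ℝ) (c : σ → ℝ), f = C a + ∑ i, C (c i) * X i :=
    ⟨_, _, eq_C_add_sum_C_mul_X_of_totalDegree_le_one hf⟩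
  classical
  have hgrad : evalGrad y (C a + ∑ i, C (c i) * X i) = c := by
    ext i
    simp [evalGrad, pderiv_X, Pi.single_apply]
  rw [linearization, hgrad]
  simp only [map_add, eval_C, map_sum, map_mul, eval_X, mul_sub, Finset.sum_sub_distrib]
  ring

theorem MvPolynomial.hasDerivAt_eval_add_smul (p : MvPolynomial σ ℝ)
    (y u : σ → ℝ) : HasDerivAt (fun t : ℝ => eval (y + t • u) p) (evalGrad y p ⬝ᵥ u) 0 := by
  classical
  induction p using MvPolynomial.induction_on with
  | C a => simpa [evalGrad, dotProduct] using hasDerivAt_const (0 : ℝ) a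
  | add p q hp hq =>
    simpa [evalGrad, dotProduct, add_mul, Finset.sum_add_distrib] using hp.fun_add hq
  | mul_X p i hp =>
    have hX : HasDerivAt (fun t : ℝ => y i + t * u i) (u i) 0 := by
      simpa using ((hasDerivAt_id (0 : ℝ)).mul_const (u i)).const_add (y i)
    have hfun : (fun t : ℝ => eval (y + t • u) (p * X i))
        = fun t => eval (y + t • u) p * (y i + t * u i) := by
      ext t; simp
    rw [hfun]
    refine (hp.fun_mul hX).congr_deriv ?_
    simp only [evalGrad, dotProduct, Derivation.leibniz, pderiv_X, Pi.single_apply, map_add,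
      smul_eq_mul, map_mul, eval_X, apply_ite (eval y), map_zero, mul_ite, mul_zero, ite_mul,
      zero_mul, add_mul, Finset.sum_add_distrib, Finset.sum_ite_eq, Finset.mem_univ, if_true,
      Finset.sum_mul, zero_smul, add_zero, mul_one]
    rw [add_comm]
    exact congrArg _ (Finset.sum_congr rfl fun x _ => by ring)

end Linearization

section Certificate

variable {n m : ℕ}

/-- The specialization `p(X, Y) ↦ p(X, y)`. -/
noncomputable def substY (y : Fin n → ℝ) :
    MvPolynomial (Fin n ⊕ Fin n) ℝ →ₐ[ℝ] MvPolynomial (Fin n) ℝ :=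
  aeval (Sum.elim X fun i => C (y i))

variable (y : Fin n → ℝ)

theorem substY_rename_inl (p : MvPolynomial (Fin n) ℝ) : substY y (rename Sum.inl p) = p := by
  rw [substY, aeval_rename, Sum.elim_comp_inl, aeval_X_left_apply]

theorem substY_rename_inr (p : MvPolynomial (Fin n) ℝ) :
    substY y (rename Sum.inr p) = C (eval y p) := by
  rw [substY, aeval_rename, Sum.elim_comp_inr]
  induction p using MvPolynomial.induction_on <;> simp_all

theorem substY_gradIP (g : Fin m → MvPolynomial (Fin n) ℝ) (j : Fin m) :
    substY y (gradIP g j) = linearization (g j) y := by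
  simp only [gradIP, linearization, map_sum, map_mul, map_sub, substY_rename_inr]
  simp [substY, evalGrad]

theorem totalDegree_substY_le (p : MvPolynomial (Fin n ⊕ Fin n) ℝ) :
    (substY y p).totalDegree ≤ p.totalDegree :=
  totalDegree_aeval_le (fun v => by cases v <;> simp [totalDegree_X, totalDegree_C]) p

end Certificate

open MemQuadraticModule in
theorem CertificateOfConvexity.memQuadraticModule_linearization {n m : ℕ}
    {g : Fin m → MvPolynomial (Fin n) ℝ} {dj : Fin m → ℕ} (hcert : CertificateOfConvexity g dj)
    {y : Fin n → ℝ} (hy : y ∈ nonnegSet g) {j : Fin m} (hj : eval y (g j) = 0) :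
    MemQuadraticModule g (2 * dj j) (linearization (g j) y) := by
  obtain ⟨σ0, ψ0, σ, ψ, ψj, hσ0, hψ0, hσ, hψ, hid, hdσ0, hdψ0, hdσ, hdψ, -⟩ := hcert j
  have hdeg := totalDegree_substY_le y
  rw [← substY_gradIP, hid]
  simp only [map_add, map_sum]
  rw [map_mul (substY y) ψj, gYp, substY_rename_inr, hj, C_0, mul_zero, add_zero]
  refine (((of_isSOS (hσ0.map _) ((hdeg _).trans hdσ0)).add (sum _ fun k _ => ?_)).add
    (of_isSOS (hψ0.map _) ((hdeg _).trans hdψ0))).add (sum _ fun k hk => ?_)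
  · have hdk := (hdeg _).trans (hdσ k)
    rw [map_mul, gXp, substY_rename_inl] at hdk ⊢
    exact isSOS_mul ((hσ k).map _) k hdk
  · have hk := (Finset.mem_erase.1 hk).1
    refine of_isSOS ?_ ((hdeg _).trans (hdψ k hk))
    rw [map_mul, gYp, substY_rename_inr, mul_comm, ← smul_eq_C_mul]
    exact ((hψ k hk).map _).smul (hy k)

theorem HasDerivAt.eventually_nhdsGT_lt {f : ℝ → ℝ} {f' x : ℝ} (hf : HasDerivAt f f' x)
    (hf' : 0 < f') : ∀ᶠ t in 𝓝[>] x, f x < f t := by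
  have hslope := (hasDerivAt_iff_tendsto_slope.mp hf).eventually (eventually_gt_nhds hf')
  filter_upwards [nhdsWithin_mono x (fun t ht => ne_of_gt ht) hslope, self_mem_nhdsWithin]
    with t hpos ht
  rw [slope_def_field] at hpos
  exact sub_pos.mp ((div_pos_iff_of_pos_right (sub_pos.mpr ht)).mp hpos)

section FirstOrder

variable {ι σ : Type*} [Fintype σ] {g : ι → MvPolynomial σ ℝ} {y u : σ → ℝ}

theorem eventually_eval_add_smul_nonneg {p : MvPolynomial σ ℝ} (hp : 0 ≤ eval y p)
    (hu : eval y p = 0 → 0 < evalGrad y p ⬝ᵥ u) :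
    ∀ᶠ t in 𝓝[>] (0 : ℝ), 0 ≤ eval (y + t • u) p := by
  have hderiv := p.hasDerivAt_eval_add_smul y u
  rcases hp.eq_or_lt with h | h
  · filter_upwards [hderiv.eventually_nhdsGT_lt (hu h.symm)] with t ht
    simpa [← h] using ht.le
  · have hcont : Tendsto (fun t : ℝ => eval (y + t • u) p) (𝓝 0) (𝓝 (eval y p)) := by
      simpa using hderiv.continuousAt.tendsto
    exact nhdsWithin_le_nhds (hcont.eventually (eventually_ge_nhds h))

theorem eventually_add_smul_mem_nonnegSet [Finite ι] (hy : y ∈ nonnegSet g)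
    (hu : ∀ j, eval y (g j) = 0 → 0 < evalGrad y (g j) ⬝ᵥ u) :
    ∀ᶠ t in 𝓝[>] (0 : ℝ), y + t • u ∈ nonnegSet g :=
  eventually_all.2 fun j => eventually_eval_add_smul_nonneg (hy j) (hu j)

theorem IsMinOn.evalGrad_dotProduct_nonneg [Finite ι] {f : MvPolynomial σ ℝ}
    (hmin : IsMinOn (fun x => eval x f) (nonnegSet g) y) (hy : y ∈ nonnegSet g)
    (hu : ∀ j, eval y (g j) = 0 → 0 < evalGrad y (g j) ⬝ᵥ u) : 0 ≤ evalGrad y f ⬝ᵥ u := by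
  by_contra! hneg
  have hdecr := (f.hasDerivAt_eval_add_smul y u).neg.eventually_nhdsGT_lt (neg_pos.2 hneg)
  obtain ⟨t, hlt, hmem⟩ := (hdecr.and (eventually_add_smul_mem_nonnegSet hy hu)).exists
  have hle : eval y f ≤ eval (y + t • u) f := hmin hmem
  simp only [Pi.neg_apply, zero_smul, add_zero, neg_lt_neg_iff] at hlt
  exact hlt.not_ge hle

end FirstOrder

section Alternative

variable {κ σ : Type*} [Fintype κ] [Fintype σ]

theorem exists_mem_stdSimplex_sum_smul_eq_zero (v : κ → σ → ℝ)
    (h : ∀ u : σ → ℝ, ∃ i, v i ⬝ᵥ u ≤ 0) : ∃ μ ∈ stdSimplex ℝ κ, ∑ i, μ i • v i = 0 := by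
  classical
  by_contra! hne
  set L := Fintype.linearCombination ℝ v
  have h0 : (0 : σ → ℝ) ∉ L '' stdSimplex ℝ κ := by
    rintro ⟨μ, hμ, hL⟩
    exact hne μ hμ (by simpa [L, Fintype.linearCombination_apply] using hL)
  obtain ⟨φ, r, hφ, hr⟩ := geometric_hahn_banach_closed_point
    ((convex_stdSimplex ℝ κ).linear_image L)
    ((isCompact_stdSimplex ℝ κ).image L.continuous_of_finiteDimensional).isClosed h0
  obtain ⟨i, hi⟩ := h fun k => -φ (Pi.single k 1)
  have hvi : φ (v i) < 0 := by
    refine (hφ _ ⟨Pi.single i 1, single_mem_stdSimplex ℝ i, ?_⟩).trans (by simpa using hr)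
    simp [L, Fintype.linearCombination_apply, Pi.single_apply]
  have hφv : v i ⬝ᵥ (fun k => -φ (Pi.single k 1)) = -φ (v i) := by
    conv_rhs => rw [pi_eq_sum_univ' (v i)]
    simp [dotProduct, map_sum, mul_neg]
  linarith

theorem exists_nonneg_sum_smul_eq_of_forall_dotProduct_pos {a : κ → σ → ℝ} {c w : σ → ℝ}
    (hw : ∀ i, 0 < a i ⬝ᵥ w) (h : ∀ u, (∀ i, 0 < a i ⬝ᵥ u) → 0 ≤ c ⬝ᵥ u) :
    ∃ μ : κ → ℝ, (∀ i, 0 ≤ μ i) ∧ c = ∑ i, μ i • a i := by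
  -- Gordan's alternative for `-c` and the `a i`; `w` rules out a zero weight on `-c`.
  obtain ⟨μ, ⟨hμ0, hμ1⟩, hsum⟩ :=
    exists_mem_stdSimplex_sum_smul_eq_zero (fun o : Option κ => o.elim (-c) a) fun u => by
      by_contra! hpos
      have := h u fun i => hpos (some i)
      have := hpos none
      simp only [Option.elim_none, neg_dotProduct] at this
      linarith
  rw [Fintype.sum_option] at hsum hμ1
  simp only [Option.elim_none, Option.elim_some, smul_neg] at hsum
  replace hsum := neg_add_eq_zero.mp hsum
  have hnone : 0 < μ none := by
    refine (hμ0 none).lt_of_ne' fun h0 => ?_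
    rw [h0, zero_smul] at hsum
    rw [h0, zero_add] at hμ1
    obtain ⟨i, hi⟩ : ∃ i, μ (some i) ≠ 0 := by
      by_contra! hzero
      simp [hzero] at hμ1
    have hpos : 0 < ∑ j, μ (some j) * (a j ⬝ᵥ w) :=
      Finset.sum_pos' (fun j _ => mul_nonneg (hμ0 _) (hw j).le)
        ⟨i, Finset.mem_univ _, mul_pos ((hμ0 _).lt_of_ne' hi) (hw i)⟩
    have hzero := congrArg (· ⬝ᵥ w) hsum
    simp only [zero_dotProduct, sum_dotProduct, smul_dotProduct, smul_eq_mul] at hzero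
    linarith
  refine ⟨fun i => (μ none)⁻¹ * μ (some i),
    fun i => mul_nonneg (inv_nonneg.2 hnone.le) (hμ0 _), ?_⟩
  simp_rw [mul_smul, ← Finset.smul_sum, ← hsum, smul_smul, inv_mul_cancel₀ hnone.ne', one_smul]

end Alternative

theorem nonnegSet_mem_nhds {ι σ : Type*} [Finite ι] {g : ι → MvPolynomial σ ℝ} {x₀ : σ → ℝ}
    (hx₀ : ∀ j, 0 < eval x₀ (g j)) : nonnegSet g ∈ 𝓝 x₀ := by
  filter_upwards [eventually_all.2 fun j =>
    (continuous_eval (g j)).continuousAt.eventually (lt_mem_nhds (hx₀ j))] with x hx j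
  exact (hx j).le

theorem dotProduct_sub_pos_of_eventually_nonneg {σ : Type*} [Fintype σ] {a x₀ y : σ → ℝ}
    (ha : a ≠ 0) (h : ∀ᶠ x in 𝓝 x₀, 0 ≤ a ⬝ᵥ (x - y)) : 0 < a ⬝ᵥ (x₀ - y) := by
  have hpath : Tendsto (fun t : ℝ => x₀ - t • a) (𝓝[>] 0) (𝓝 x₀) := by
    have : Continuous fun t : ℝ => x₀ - t • a := by fun_prop
    simpa using this.continuousAt.tendsto.mono_left (nhdsWithin_le_nhds (a := (0 : ℝ)))
  obtain ⟨t, ht, htpos⟩ := ((hpath.eventually h).and self_mem_nhdsWithin).exists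
  have haa : 0 < a ⬝ᵥ a := lt_of_le_of_ne (Finset.sum_nonneg fun i _ => mul_self_nonneg (a i))
    (Ne.symm (dotProduct_self_eq_zero.not.2 ha))
  rw [sub_right_comm, dotProduct_sub, dotProduct_smul, smul_eq_mul] at ht
  nlinarith [mul_pos (Set.mem_Ioi.mp htpos) haa]

section KKT

variable {ι σ : Type*} [Fintype ι] [Fintype σ] {g : ι → MvPolynomial σ ℝ} {y : σ → ℝ}

theorem exists_kkt_multipliers {f : MvPolynomial σ ℝ} (hy : y ∈ nonnegSet g)
    (hmin : IsMinOn (fun x => eval x f) (nonnegSet g) y) {w : σ → ℝ}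
    (hw : ∀ j, eval y (g j) = 0 → 0 < evalGrad y (g j) ⬝ᵥ w) :
    ∃ μ : ι → ℝ, (∀ j, 0 ≤ μ j) ∧ (∀ j, μ j * eval y (g j) = 0) ∧
      evalGrad y f = ∑ j, μ j • evalGrad y (g j) := by
  classical
  obtain ⟨μ, hμ, hgrad⟩ := exists_nonneg_sum_smul_eq_of_forall_dotProduct_pos
    (a := fun j : {j // eval y (g j) = 0} => evalGrad y (g j)) (fun j => hw j j.2)
    fun u hu => hmin.evalGrad_dotProduct_nonneg hy fun j hj => hu ⟨j, hj⟩
  refine ⟨fun j => if hj : eval y (g j) = 0 then μ ⟨j, hj⟩ else 0, fun j => ?_, fun j => ?_, ?_⟩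
  · dsimp only
    split_ifs
    exacts [hμ _, le_rfl]
  · dsimp only
    split_ifs with hj <;> simp [hj]
  · rw [hgrad, ← Fintype.sum_subtype_add_sum_subtype fun j => eval y (g j) = 0]
    have hact : ∀ j : {j // eval y (g j) = 0},
        (if hj : eval y (g j) = 0 then μ ⟨j, hj⟩ else 0) = μ j := fun j => dif_pos j.2
    have hinact : ∀ j : {j // ¬eval y (g j) = 0},
        (if hj : eval y (g j) = 0 then μ ⟨j, hj⟩ else 0) = 0 := fun j => dif_neg j.2
    simp only [hact, hinact, zero_smul, Finset.sum_const_zero, add_zero]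

end KKT

theorem CertificateOfConvexity.evalGrad_dotProduct_pos {n m : ℕ}
    {g : Fin m → MvPolynomial (Fin n) ℝ} {dj : Fin m → ℕ} (hcert : CertificateOfConvexity g dj)
    {x₀ y : Fin n → ℝ} (hx₀ : ∀ j, 0 < eval x₀ (g j)) (hy : y ∈ nonnegSet g) {j : Fin m}
    (hj : eval y (g j) = 0) (hgrad : evalGrad y (g j) ≠ 0) :
    0 < evalGrad y (g j) ⬝ᵥ (x₀ - y) := by
  refine dotProduct_sub_pos_of_eventually_nonneg hgrad ?_
  filter_upwards [nonnegSet_mem_nhds hx₀] with x hx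
  rw [← eval_linearization]
  exact (hcert.memQuadraticModule_linearization hy hj).eval_nonneg hx

open MemQuadraticModule in
theorem memQuadraticModule_of_kkt {σ ι : Type*} [Fintype σ] [Fintype ι]
    {g : ι → MvPolynomial σ ℝ} {D : ℕ} {f : MvPolynomial σ ℝ} (hf : f.totalDegree ≤ 1)
    {y : σ → ℝ} (hfy : 0 ≤ eval y f) {μ : ι → ℝ} (hμ : ∀ j, 0 ≤ μ j)
    (hslack : ∀ j, μ j * eval y (g j) = 0) (hgrad : evalGrad y f = ∑ j, μ j • evalGrad y (g j))
    (hlin : ∀ j, eval y (g j) = 0 → MemQuadraticModule g D (linearization (g j) y)) :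
    MemQuadraticModule g D f := by
  rw [eq_C_eval_add_linearization hf y, linearization_eq_sum_smul hgrad]
  refine (of_isSOS (IsSOS.C hfy) (by simp)).add (sum _ fun j _ => ?_)
  rcases mul_eq_zero.1 (hslack j) with h | h
  · rw [h, zero_smul]
    exact zero
  · exact (hlin j h).smul (hμ j)

theorem stmt_17_general (n m : ℕ) (g : Fin m → MvPolynomial (Fin n) ℝ)
    (K : Set (Fin n → ℝ)) (hK : K = {x | ∀ j, 0 ≤ eval x (g j)})
    (hcompact : IsCompact K)
    (slater : ∃ x₀ : Fin n → ℝ, ∀ j, 0 < eval x₀ (g j))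
    (hnd : ∀ j : Fin m, ∀ y ∈ K, eval y (g j) = 0 →
      (fun i => eval y (pderiv i (g j))) ≠ (0 : Fin n → ℝ))
    (dj : Fin m → ℕ) (hcert : CertificateOfConvexity g dj)
    (d : ℕ) (hd : d = Finset.univ.sup dj) :
    ∀ f : MvPolynomial (Fin n) ℝ, f.totalDegree ≤ 1 → (∀ x ∈ K, 0 ≤ eval x f) →
      ∃ (Δ0 : MvPolynomial (Fin n) ℝ) (Δ : Fin m → MvPolynomial (Fin n) ℝ),
        IsSOS Δ0 ∧ (∀ j, IsSOS (Δ j)) ∧ Δ0.totalDegree ≤ 2 * d ∧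
        (∀ j, (Δ j * g j).totalDegree ≤ 2 * d) ∧
        f = Δ0 + ∑ j, Δ j * g j := by
  intro f hf hfK
  subst hK hd
  obtain ⟨x₀, hx₀⟩ := slater
  obtain ⟨y, hy, hmin⟩ :=
    hcompact.exists_isMinOn ⟨x₀, fun j => (hx₀ j).le⟩ (continuous_eval f).continuousOn
  obtain ⟨μ, hμ, hslack, hgrad⟩ := exists_kkt_multipliers hy hmin
    fun j hj => hcert.evalGrad_dotProduct_pos hx₀ hy hj (hnd j y hy hj)
  refine memQuadraticModule_of_kkt hf (hfK y hy) hμ hslack hgrad fun j hj => ?_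
  exact (hcert.memQuadraticModule_linearization hy hj).mono
    (Nat.mul_le_mul_left 2 (Finset.le_sup (Finset.mem_univ j)))

/-- under the Archimedean assumption, Slater's condition, the boundary
nondegeneracy, and the certificate of convexity with degree bounds `2d₁,…,2dₘ`
(`d := maxⱼ dⱼ`), every polynomial of degree at most 1 nonnegative on `K` has a Putinar
representation `f = Δ₀ + Σⱼ Δⱼ·gⱼ` with `Δⱼ` SOS, `deg Δ₀ ≤ 2d`, `deg(Δⱼ·gⱼ) ≤ 2d`. -/
theorem stmt_17 (n m : ℕ) (g : Fin m → MvPolynomial (Fin n) ℝ)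
    (K : Set (Fin n → ℝ)) (hK : K = {x | ∀ j, 0 ≤ eval x (g j)})
    (hcompact : IsCompact K)
    (harch : ∃ (M : ℝ) (σ₀ : MvPolynomial (Fin n) ℝ) (σ : Fin m → MvPolynomial (Fin n) ℝ),
      IsSOS σ₀ ∧ (∀ j, IsSOS (σ j)) ∧
      C M - ∑ i, X i ^ 2 = σ₀ + ∑ j, σ j * g j)
    (slater : ∃ x₀ : Fin n → ℝ, ∀ j, 0 < eval x₀ (g j))
    (hnd : ∀ j : Fin m, ∀ y ∈ K, eval y (g j) = 0 →
      (fun i => eval y (pderiv i (g j))) ≠ (0 : Fin n → ℝ))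
    (dj : Fin m → ℕ) (hcert : CertificateOfConvexity g dj)
    (d : ℕ) (hd : d = Finset.univ.sup dj) :
    ∀ f : MvPolynomial (Fin n) ℝ, f.totalDegree ≤ 1 → (∀ x ∈ K, 0 ≤ eval x f) →
      ∃ (Δ0 : MvPolynomial (Fin n) ℝ) (Δ : Fin m → MvPolynomial (Fin n) ℝ),
        IsSOS Δ0 ∧ (∀ j, IsSOS (Δ j)) ∧ Δ0.totalDegree ≤ 2 * d ∧
        (∀ j, (Δ j * g j).totalDegree ≤ 2 * d) ∧
        f = Δ0 + ∑ j, Δ j * g j :=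
  stmt_17_general n m g K hK hcompact slater hnd dj hcert d hd
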